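/- arXiv:1311.7221 — 4 statements merged into one kernel-verified Lean document; each statement's English description precedes it below -/
import Mathlib

section
/- Let G = (V,E) be a locally finite graph and q : V → ℝ such that (G,q) is (a,k)-sparse for some a, k ≥ 0. Then q belongs to K_{0⁺} if and only if for every α ∈ (0,1) there is κ_α ≥ 0 such that q₋(x) ≤ α(deg(x) + q₊(x)) + κ_α for all x ∈ V. -/
open scoped BigOperators

noncomputable section

variable {V : Type*} [DecidableEq V] (G : SimpleGraph V) [DecidableRel G.Adj]

/-- The squared `ℓ²`-norm `‖f‖² = ∑_x |f x|²` of a (finitely supported) function. -/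
def qNormSq (f : V → ℂ) : ℝ := ∑' x, ‖f x‖ ^ 2

/-- The quadratic form of the Laplacian:
`Q_Δ(f) = (1/2) ∑_{x ~ y} |f x - f y|²` (sum over ordered pairs of adjacent vertices). -/
def qLap (f : V → ℂ) : ℝ :=
  (1 / 2) * ∑' (x : V), ∑' (y : V), if G.Adj x y then ‖f x - f y‖ ^ 2 else 0

/-- The magnetic quadratic form
`Q_θ(f) = (1/2) ∑_{x ~ y} |f x - e^{iθ(x,y)} f y|²`. -/
def qMag (θ : V → V → ℝ) (f : V → ℂ) : ℝ :=
  (1 / 2) * ∑' (x : V), ∑' (y : V),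
    if G.Adj x y then ‖f x - Complex.exp (Complex.I * (θ x y)) * f y‖ ^ 2 else 0

/-- The quadratic form of a potential: `Q_q(f) = ∑_x q x * |f x|²`. -/
def qPot (q : V → ℝ) (f : V → ℂ) : ℝ := ∑' x, q x * ‖f x‖ ^ 2

variable [G.LocallyFinite]

/-- The quadratic form of the degree: `Q_deg(f) = ∑_x deg x * |f x|²`. -/
def qDeg (f : V → ℂ) : ℝ := ∑' x, (G.degree x : ℝ) * ‖f x‖ ^ 2

/-- Twice the number of undirected edges of the subgraph induced on `W`,
i.e. the number of ordered pairs of adjacent vertices in `W × W`. -/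
def edgesTwice (W : Finset V) : ℕ := ((W ×ˢ W).filter fun p => G.Adj p.1 p.2).card

/-- The cardinality `|∂W|` of the edge boundary of `W`. -/
def bdryCard (W : Finset V) : ℕ :=
  ∑ x ∈ W, ((G.neighborFinset x).filter fun y => y ∉ W).card

/-- `(G, q)` is `(a,k)`-sparse: `2|E_W| ≤ k|W| + a(|∂W| + q₊(W))` for all finite `W`. -/
def IsSparse (q : V → ℝ) (a k : ℝ) : Prop :=
  ∀ W : Finset V,
    (edgesTwice G W : ℝ) ≤ k * W.card + a * ((bdryCard G W : ℝ) + ∑ x ∈ W, max (q x) 0)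

/-- The potential `q` belongs to the class `K_α`:
`Q_{q₋}(f) ≤ α (Q_Δ(f) + Q_{q₊}(f)) + C ‖f‖²` for all finitely supported `f`. -/
def KClass (q : V → ℝ) (α : ℝ) : Prop :=
  ∃ C : ℝ, 0 ≤ C ∧ ∀ f : V → ℂ, (Function.support f).Finite →
    qPot (fun x => max (-q x) 0) f ≤
      α * (qLap G f + qPot (fun x => max (q x) 0) f) + C * qNormSq f

/-- The potential `q` belongs to the magnetic class `K_α^θ`:
`Q_{q₋}(f) ≤ α (Q_θ(f) + Q_{q₊}(f)) + C ‖f‖²` for all finitely supported `f`. -/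
def KClassTheta (θ : V → V → ℝ) (q : V → ℝ) (α : ℝ) : Prop :=
  ∃ C : ℝ, 0 ≤ C ∧ ∀ f : V → ℂ, (Function.support f).Finite →
    qPot (fun x => max (-q x) 0) f ≤
      α * (qMag G θ f + qPot (fun x => max (q x) 0) f) + C * qNormSq f

/-- The Cheeger (isoperimetric) constant of `U ⊆ V`:
the infimum over nonempty finite `W ⊆ U` of `(|∂W| + q(W)) / (deg(W) + q(W))`,
with the convention that the quotient is `0` when the denominator vanishes. -/
def cheeger (q : V → ℝ) (U : Set V) : ℝ :=
  ⨅ W : {W : Finset V // ↑W ⊆ U ∧ W.Nonempty},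
    if (∑ x ∈ W.1, ((G.degree x : ℝ) + q x)) = 0 then 0
    else ((bdryCard G W.1 : ℝ) + ∑ x ∈ W.1, q x) / ∑ x ∈ W.1, ((G.degree x : ℝ) + q x)

/-- The Cheeger constant at infinity: `α_∞ = sup over finite K of α_{V∖K}`. -/
def cheegerInfty (q : V → ℝ) : ℝ :=
  ⨆ K : Finset V, cheeger G q ((↑K : Set V)ᶜ)

/-!
Sparseness controls the degree form by the Laplacian: for finitely supported `f`,
`Q_deg(f) ≤ 8(a+1)² Q_Δ(f) + 2a Q_{q₊}(f) + 2k ‖f‖²`. This is the set inequality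
`deg(W) ≤ k|W| + (a+1)|∂W| + a q₊(W)` integrated over the level sets of `|f|²` (a discrete
coarea formula, proved by peeling off the lowest level), after which the boundary terms
`(|f x|² - |f y|²)₊ ≤ 2|f x - f y| |f x|` are absorbed into `Q_Δ(f)` and half of `Q_deg(f)`.
Hence a pointwise bound `q₋ ≤ β (deg + q₊) + κ` puts `q` in `K_α` with `α = β (8(a+1)² + 1)`.
Conversely, the `K_α` inequality tested on the indicator of a vertex `x`, whose Laplacian form
is `deg x`, is the pointwise bound at `x`.
-/

open Finset

omit [DecidableEq V] in
theorem qPot_eq_sum (p : V → ℝ) {f : V → ℂ} {T : Finset V} (hT : ∀ x ∉ T, f x = 0) :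
    qPot p f = ∑ x ∈ T, p x * ‖f x‖ ^ 2 :=
  tsum_eq_sum fun x hx => by simp [hT x hx]

omit [DecidableEq V] in
theorem qNormSq_eq_sum {f : V → ℂ} {T : Finset V} (hT : ∀ x ∉ T, f x = 0) :
    qNormSq f = ∑ x ∈ T, ‖f x‖ ^ 2 :=
  tsum_eq_sum fun x hx => by simp [hT x hx]

omit [DecidableEq V] in
theorem qPot_nonneg {p : V → ℝ} (hp : ∀ x, 0 ≤ p x) (f : V → ℂ) : 0 ≤ qPot p f :=
  tsum_nonneg fun x => mul_nonneg (hp x) (sq_nonneg _)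

omit [DecidableEq V] in
theorem qNormSq_nonneg (f : V → ℂ) : 0 ≤ qNormSq f :=
  tsum_nonneg fun _ => sq_nonneg _

omit [DecidableEq V] in
theorem tsum_ite_adj_eq_sum_neighborFinset (x : V) (h : V → ℝ) :
    ∑' y, (if G.Adj x y then h y else 0) = ∑ y ∈ G.neighborFinset x, h y := by
  rw [tsum_eq_sum (s := G.neighborFinset x) fun y hy => if_neg (by simpa using hy)]
  exact sum_congr rfl fun y hy => if_pos (by simpa using hy)

omit [DecidableEq V] in
theorem qLap_eq_sum {f : V → ℂ} (T : Finset V) (hT : ∀ x ∉ T, ∀ y, G.Adj x y → f x = f y) :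
    qLap G f = 1 / 2 * ∑ x ∈ T, ∑ y ∈ G.neighborFinset x, ‖f x - f y‖ ^ 2 := by
  rw [qLap, tsum_congr fun x => tsum_ite_adj_eq_sum_neighborFinset G x _]
  congr 1
  refine tsum_eq_sum fun x hx => sum_eq_zero fun y hy => ?_
  simp [hT x hx y (by simpa using hy)]

omit [DecidableEq V] [G.LocallyFinite] in
theorem qLap_nonneg (f : V → ℂ) : 0 ≤ qLap G f :=
  mul_nonneg (by norm_num) <| tsum_nonneg fun x => tsum_nonneg fun y => by
    split_ifs <;> positivity

theorem qPot_single (p : V → ℝ) (x₀ : V) : qPot p (Pi.single x₀ 1) = p x₀ := by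
  rw [qPot_eq_sum p (T := {x₀}) fun x hx => Pi.single_eq_of_ne (by simpa using hx) _]
  simp

theorem qNormSq_single (x₀ : V) : qNormSq (Pi.single x₀ (1 : ℂ)) = 1 := by
  rw [qNormSq_eq_sum (T := {x₀}) fun x hx => Pi.single_eq_of_ne (by simpa using hx) _]
  simp

theorem qLap_single (x₀ : V) : qLap G (Pi.single x₀ 1) = G.degree x₀ := by
  set δ : V → ℂ := Pi.single x₀ 1
  have hcenter : ∀ y ∈ G.neighborFinset x₀, ‖δ x₀ - δ y‖ ^ 2 = 1 := fun y hy => by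
    simp [δ, ((G.mem_neighborFinset x₀ y).1 hy).ne']
  have hnbr : ∀ x ∈ G.neighborFinset x₀, ∑ y ∈ G.neighborFinset x, ‖δ x - δ y‖ ^ 2 = 1 :=
    fun x hx => by
      have hadj := (G.mem_neighborFinset x₀ x).1 hx
      simp [δ, Pi.single_apply, hadj.ne', apply_ite (fun z : ℂ => ‖z‖ ^ 2), hadj.symm]
  rw [qLap_eq_sum G (insert x₀ (G.neighborFinset x₀)) fun x hx y hxy => ?_]
  · rw [sum_insert (G.notMem_neighborFinset_self x₀), sum_congr rfl hcenter,
      sum_congr rfl hnbr]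
    simp
    ring
  · have hx₀ : x ≠ x₀ := fun h => hx (h ▸ mem_insert_self _ _)
    have hy₀ : y ≠ x₀ := fun h => hx (mem_insert_of_mem (by simpa [h] using hxy.symm))
    simp [δ, hx₀, hy₀]

theorem mul_max_sq_sub_sq_le {E : Type*} [SeminormedAddCommGroup E] (c : ℝ) (u v : E) :
    c * max (‖u‖ ^ 2 - ‖v‖ ^ 2) 0 ≤ ‖u‖ ^ 2 / 2 + 2 * c ^ 2 * ‖u - v‖ ^ 2 := by
  have hsq : 0 ≤ (‖u‖ - 2 * c * ‖u - v‖) ^ 2 := sq_nonneg _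
  rcases le_total (‖u‖ ^ 2) (‖v‖ ^ 2) with huv | huv
  · rw [max_eq_right (by linarith)]
    nlinarith
  rw [max_eq_left (by linarith)]
  rcases le_total c 0 with hc | hc
  · nlinarith
  have hvu : ‖v‖ ≤ ‖u‖ := by nlinarith [norm_nonneg u, norm_nonneg v]
  have hdiff : ‖u‖ ^ 2 - ‖v‖ ^ 2 ≤ ‖u - v‖ * (2 * ‖u‖) := by
    nlinarith [norm_sub_norm_le u v, norm_nonneg v]
  nlinarith [mul_le_mul_of_nonneg_left hdiff hc]

theorem sum_degree_eq_edgesTwice_add_bdryCard (W : Finset V) :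
    ∑ x ∈ W, G.degree x = edgesTwice G W + bdryCard G W := by
  rw [edgesTwice, bdryCard, card_filter, sum_product, ← sum_add_distrib]
  refine sum_congr rfl fun x _ => ?_
  have hW : W.filter (G.Adj x) = (G.neighborFinset x).filter (· ∈ W) := by
    ext y; simp [and_comm]
  rw [← card_filter, hW, card_filter_add_card_filter_not, G.card_neighborFinset_eq_degree]

omit [DecidableRel G.Adj] in
theorem sum_max_sub_eq_sub_layer_add_bdryCard (W : Finset V) {g : V → ℝ} {m : ℝ} (hm : 0 ≤ m)
    (hmg : ∀ x ∈ W, m ≤ g x) (hgW : ∀ x ∉ W, g x = 0) :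
    ∑ x ∈ W, ∑ y ∈ G.neighborFinset x, max (g x - g y) 0 =
      ∑ x ∈ W, ∑ y ∈ G.neighborFinset x,
          max ((g x - if x ∈ W then m else 0) - (g y - if y ∈ W then m else 0)) 0
        + m * bdryCard G W := by
  have hxy : ∀ x ∈ W, ∀ y, max (g x - g y) 0 =
      max ((g x - if x ∈ W then m else 0) - (g y - if y ∈ W then m else 0)) 0
        + m * if y ∉ W then 1 else 0 := by
    intro x hx y
    by_cases hy : y ∈ W
    · simp [hx, hy]
    · have := hmg x hx
      simp only [hx, hy, hgW y hy, if_true, if_false, not_false_eq_true]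
      rw [max_eq_left (by linarith), max_eq_left (by linarith)]
      ring
  rw [bdryCard, Nat.cast_sum, mul_sum, ← sum_add_distrib]
  refine sum_congr rfl fun x hx => ?_
  simp only [sum_congr rfl fun y _ => hxy x hx y, sum_add_distrib, ← mul_sum, sum_boole]

section Sparse

variable {G} {q : V → ℝ} {a k : ℝ}

theorem IsSparse.sum_degree_le (h : IsSparse G q a k) (W : Finset V) :
    ∑ x ∈ W, (G.degree x : ℝ) ≤ k * #W + (a + 1) * bdryCard G W + a * ∑ x ∈ W, max (q x) 0 := by
  have hW : ∑ x ∈ W, (G.degree x : ℝ) = edgesTwice G W + bdryCard G W := by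
    exact_mod_cast sum_degree_eq_edgesTwice_add_bdryCard G W
  linarith [h W]

theorem IsSparse.sum_degree_mul_le (h : IsSparse G q a k) (W : Finset V) {g : V → ℝ}
    (hg : ∀ x, 0 ≤ g x) (hgW : ∀ x ∉ W, g x = 0) :
    ∑ x ∈ W, (G.degree x : ℝ) * g x ≤ k * ∑ x ∈ W, g x
      + (a + 1) * ∑ x ∈ W, ∑ y ∈ G.neighborFinset x, max (g x - g y) 0
      + a * ∑ x ∈ W, max (q x) 0 * g x := by
  induction W using Finset.strongInduction generalizing g with
  | H W ih =>
  rcases W.eq_empty_or_nonempty with rfl | hne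
  · simp
  -- Peel off the lowest layer `m` on `W`: it costs `m` times the set inequality for `W`,
  -- and what is left of `g` vanishes off `W.erase x₀`.
  obtain ⟨x₀, hx₀, hmin⟩ := W.exists_min_image g hne
  set m := g x₀
  set g' : V → ℝ := fun x => g x - if x ∈ W then m else 0 with hg'
  have hg'0 : ∀ x, 0 ≤ g' x := fun x => by
    by_cases hx : x ∈ W
    · simp [hg', hx, hmin x hx]
    · simp [hg', hx, hg x]
  have hg'x₀ : g' x₀ = 0 := by simp [hg', hx₀, m]
  have hg'W : ∀ x ∉ W.erase x₀, g' x = 0 := fun x hx => by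
    rcases eq_or_ne x x₀ with rfl | hne
    · exact hg'x₀
    · have hxW : x ∉ W := fun hxW => hx (mem_erase.2 ⟨hne, hxW⟩)
      simp [hg', hxW, hgW x hxW]
  have hIH := ih (W.erase x₀) (erase_ssubset hx₀) hg'0 hg'W
  have hvarx₀ : ∑ y ∈ G.neighborFinset x₀, max (g' x₀ - g' y) 0 = 0 :=
    sum_eq_zero fun y _ => max_eq_right (by linarith [hg'0 y])
  rw [sum_erase W (f := fun x => ∑ y ∈ G.neighborFinset x, max (g' x - g' y) 0) hvarx₀,
    sum_erase W (by simp [hg'x₀]), sum_erase W (by simp [hg'x₀]),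
    sum_erase W (by simp [hg'x₀])] at hIH
  have hsplit : ∀ c : V → ℝ, ∑ x ∈ W, c x * g x = ∑ x ∈ W, c x * g' x + m * ∑ x ∈ W, c x := by
    intro c
    rw [mul_sum, ← sum_add_distrib]
    exact sum_congr rfl fun x hx => by simp [hg', hx]; ring
  have hvar := sum_max_sub_eq_sub_layer_add_bdryCard G W (hg x₀) hmin hgW
  have hlayer := mul_le_mul_of_nonneg_left (h.sum_degree_le W) (hg x₀)
  have hcard := hsplit 1
  simp only [Pi.one_apply, one_mul, sum_const, nsmul_one] at hcard
  rw [hsplit, hsplit, hcard, hvar]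
  linarith

theorem IsSparse.qDeg_le (h : IsSparse G q a k) {f : V → ℂ} (hf : (Function.support f).Finite) :
    qDeg G f ≤ 8 * (a + 1) ^ 2 * qLap G f + 2 * a * qPot (fun x => max (q x) 0) f
      + 2 * k * qNormSq f := by
  set S := hf.toFinset
  set T := S ∪ S.biUnion fun x => G.neighborFinset x
  have hfT : ∀ x ∉ T, f x = 0 := fun x hx => by
    by_contra hfx
    exact hx (mem_union_left _ (by simpa [S] using hfx))
  have hLap : qLap G f = 1 / 2 * ∑ x ∈ T, ∑ y ∈ G.neighborFinset x, ‖f x - f y‖ ^ 2 := by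
    refine qLap_eq_sum G T fun x hx y hxy => ?_
    rw [hfT x hx, eq_comm]
    by_contra hfy
    have hyS : y ∈ S := by simpa [S] using hfy
    exact hx (mem_union_right _ (mem_biUnion.2 ⟨y, hyS, by simpa using hxy.symm⟩))
  have hcoarea := h.sum_degree_mul_le T (g := fun x => ‖f x‖ ^ 2) (fun _ => sq_nonneg _)
    (fun x hx => by simp [hfT x hx])
  have hvar : (a + 1) * ∑ x ∈ T, ∑ y ∈ G.neighborFinset x, max (‖f x‖ ^ 2 - ‖f y‖ ^ 2) 0
      ≤ 1 / 2 * ∑ x ∈ T, (G.degree x : ℝ) * ‖f x‖ ^ 2 + 4 * (a + 1) ^ 2 * qLap G f := by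
    rw [hLap, mul_sum]
    calc ∑ x ∈ T, (a + 1) * ∑ y ∈ G.neighborFinset x, max (‖f x‖ ^ 2 - ‖f y‖ ^ 2) 0
        ≤ ∑ x ∈ T, ∑ y ∈ G.neighborFinset x, (‖f x‖ ^ 2 / 2 + 2 * (a + 1) ^ 2 * ‖f x - f y‖ ^ 2) :=
          sum_le_sum fun x _ => by
            rw [mul_sum]; exact sum_le_sum fun y _ => mul_max_sq_sub_sq_le _ _ _
      _ = _ := by
          simp only [sum_add_distrib, sum_const, G.card_neighborFinset_eq_degree, nsmul_eq_mul,
            mul_div_assoc', ← sum_div, ← mul_sum]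
          ring_nf
  rw [qPot_eq_sum _ hfT, qNormSq_eq_sum hfT, show qDeg G f = _ from qPot_eq_sum _ hfT]
  linarith

theorem IsSparse.kClass (h : IsSparse G q a k) (hk : 0 ≤ k) {β κ : ℝ} (hβ : 0 ≤ β) (hκ : 0 ≤ κ)
    (hq : ∀ x, max (-q x) 0 ≤ β * ((G.degree x : ℝ) + max (q x) 0) + κ) :
    KClass G q (β * (8 * (a + 1) ^ 2 + 1)) := by
  refine ⟨β * (2 * k) + κ, by positivity, fun f hf => ?_⟩
  have hfS : ∀ x ∉ hf.toFinset, f x = 0 := fun x hx => by simpa using hx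
  have hneg : qPot (fun x => max (-q x) 0) f
      ≤ β * qDeg G f + β * qPot (fun x => max (q x) 0) f + κ * qNormSq f := by
    rw [qPot_eq_sum _ hfS, qPot_eq_sum _ hfS, qNormSq_eq_sum hfS,
      show qDeg G f = _ from qPot_eq_sum _ hfS, mul_sum, mul_sum, mul_sum, ← sum_add_distrib,
      ← sum_add_distrib]
    exact sum_le_sum fun x _ => by linarith [mul_le_mul_of_nonneg_right (hq x) (sq_nonneg ‖f x‖)]
  have hdeg := mul_le_mul_of_nonneg_left (h.qDeg_le hf) hβ
  have hLap := mul_nonneg hβ (qLap_nonneg G f)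
  have hPos := mul_nonneg hβ (qPot_nonneg (fun x => le_max_right (q x) 0) f)
  have h2a : 2 * a ≤ 8 * (a + 1) ^ 2 := by nlinarith [sq_nonneg (2 * a + 1)]
  linarith [mul_le_mul_of_nonneg_right h2a hPos]

end Sparse

theorem stmt8 (q : V → ℝ) (a k : ℝ) (hk : 0 ≤ k)
    (hsparse : IsSparse G q a k) :
    (∀ α : ℝ, 0 < α → α < 1 → KClass G q α) ↔
    (∀ α : ℝ, 0 < α → α < 1 → ∃ κ : ℝ, 0 ≤ κ ∧
      ∀ x : V, max (-q x) 0 ≤ α * ((G.degree x : ℝ) + max (q x) 0) + κ) := by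
  refine ⟨fun h α hα hα1 => ?_, fun h α hα hα1 => ?_⟩
  · obtain ⟨C, hC, hCf⟩ := h α hα hα1
    refine ⟨C, hC, fun x => ?_⟩
    simpa [qPot_single, qLap_single, qNormSq_single] using
      hCf (Pi.single x 1) ((Set.finite_singleton x).subset Pi.support_single_subset)
  · have hA : 1 ≤ 8 * (a + 1) ^ 2 + 1 := by nlinarith [sq_nonneg (a + 1)]
    set β := α / (8 * (a + 1) ^ 2 + 1)
    have hβ : 0 < β := by positivity
    obtain ⟨κ, hκ, hq⟩ := h β hβ (lt_of_le_of_lt (div_le_self hα.le hA) hα1)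
    simpa [β, div_mul_cancel₀ α (by positivity : (8 * (a + 1) ^ 2 + 1 : ℝ) ≠ 0)] using
      hsparse.kClass hk hβ.le hκ hq
end
end

section
/- (Upside-Down Lemma, magnetic version.) Let G = (V,E) be a locally finite graph, θ a phase and q : V → ℝ. Assume there are ã ∈ (0,1) and k̃ ≥ 0 such that for all finitely supported f : V → ℂ, (1−ã)(Q_deg(f) + Q_q(f)) − k̃·‖f‖² ≤ Q_Δ(f) + Q_q(f). Then for all finitely supported f : V → ℂ one has (1−ã)(Q_deg(f) + Q_q(f)) − k̃·‖f‖² ≤ Q_θ(f) + Q_q(f) ≤ (1+ã)(Q_deg(f) + Q_q(f)) + k̃·‖f‖². -/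
open scoped BigOperators

noncomputable section

variable {V : Type*} [DecidableEq V] (G : SimpleGraph V) [DecidableRel G.Adj]

variable [G.LocallyFinite]

lemma pw1 (a b c : ℂ) (hc : ‖c‖ = 1) : (‖a‖ - ‖b‖) ^ 2 ≤ ‖a - c * b‖ ^ 2 := by
  have h := abs_norm_sub_norm_le a (c * b)
  rw [norm_mul, hc, one_mul] at h
  calc (‖a‖ - ‖b‖) ^ 2 = |‖a‖ - ‖b‖| ^ 2 := (sq_abs _).symm
    _ ≤ ‖a - c * b‖ ^ 2 := by
        have := pow_le_pow_left₀ (abs_nonneg (‖a‖ - ‖b‖)) h 2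
        simpa using this

lemma pw2 (a b c : ℂ) (hc : ‖c‖ = 1) :
    ‖a - c * b‖ ^ 2 + (‖a‖ - ‖b‖) ^ 2 ≤ 2 * (‖a‖ ^ 2 + ‖b‖ ^ 2) := by
  have h : ‖a - c * b‖ ≤ ‖a‖ + ‖b‖ := by
    calc ‖a - c * b‖ ≤ ‖a‖ + ‖c * b‖ := norm_sub_le _ _
      _ = ‖a‖ + ‖b‖ := by rw [norm_mul, hc, one_mul]
  nlinarith [norm_nonneg (a - c * b)]

/-- Upside-Down Lemma, magnetic version: if
`(1-ã)(Q_deg(f)+Q_q(f)) - k̃‖f‖² ≤ Q_Δ(f)+Q_q(f)` for all finitely supported `f`, then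
`(1-ã)(Q_deg(f)+Q_q(f)) - k̃‖f‖² ≤ Q_θ(f)+Q_q(f) ≤ (1+ã)(Q_deg(f)+Q_q(f)) + k̃‖f‖²`. -/
theorem stmt10 [Countable V] (θ : V → V → ℝ) (hθ : ∀ x y, θ x y = -θ y x) (q : V → ℝ)
    (ta tk : ℝ) (hta0 : 0 < ta) (hta1 : ta < 1) (htk : 0 ≤ tk)
    (h : ∀ f : V → ℂ, (Function.support f).Finite →
      (1 - ta) * (qDeg G f + qPot q f) - tk * qNormSq f ≤ qLap G f + qPot q f)
    (f : V → ℂ) (hf : (Function.support f).Finite) :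
    (1 - ta) * (qDeg G f + qPot q f) - tk * qNormSq f ≤ qMag G θ f + qPot q f ∧
    qMag G θ f + qPot q f ≤ (1 + ta) * (qDeg G f + qPot q f) + tk * qNormSq f := by
  classical
  set F : Finset V := hf.toFinset with hFdef
  set S : Finset V := F ∪ F.biUnion (fun x => G.neighborFinset x) with hSdef
  have hmemF : ∀ x, x ∈ F ↔ f x ≠ 0 := by
    intro x; simp [hFdef, Set.Finite.mem_toFinset, Function.mem_support]
  have hf0 : ∀ x ∉ S, f x = 0 := by
    intro x hx
    by_contra hne
    exact hx (Finset.mem_union_left _ ((hmemF x).2 hne))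
  have hNS : ∀ x, f x ≠ 0 → G.neighborFinset x ⊆ S := by
    intro x hx y hy
    exact Finset.mem_union_right _ (Finset.mem_biUnion.2 ⟨x, (hmemF x).2 hx, hy⟩)
  have hadjS : ∀ x y, G.Adj x y → f y ≠ 0 → x ∈ S := by
    intro x y hadj hy
    exact hNS y hy (by simp [SimpleGraph.mem_neighborFinset, hadj.symm])
  -- double tsum reduction
  have hred : ∀ t : V → V → ℝ,
      (∀ x y, t x y ≠ 0 → G.Adj x y ∧ (f x ≠ 0 ∨ f y ≠ 0)) →
      (∑' x, ∑' y, t x y) = ∑ x ∈ S, ∑ y ∈ S, t x y := by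
    intro t ht
    have hin : ∀ x, (∑' y, t x y) = ∑ y ∈ S, t x y := by
      intro x
      refine tsum_eq_sum ?_
      intro y hy
      by_contra hne
      obtain ⟨hadj, hor⟩ := ht x y hne
      rcases hor with h1 | h2
      · exact hy (hNS x h1 (by simp [SimpleGraph.mem_neighborFinset, hadj]))
      · exact hy (Finset.mem_union_left _ ((hmemF y).2 h2))
    rw [tsum_congr hin]
    refine tsum_eq_sum ?_
    intro x hx
    refine Finset.sum_eq_zero ?_
    intro y _
    by_contra hne
    obtain ⟨hadj, hor⟩ := ht x y hne
    rcases hor with h1 | h2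
    · exact hx (Finset.mem_union_left _ ((hmemF x).2 h1))
    · exact hx (hadjS x y hadj h2)
  -- the modulus function
  set g : V → ℂ := fun x => ((‖f x‖ : ℝ) : ℂ) with hgdef
  have hgnorm : ∀ x, ‖g x‖ = ‖f x‖ := by
    intro x; simp [hgdef, Complex.norm_real]
  have hgsup : (Function.support g).Finite := by
    have : Function.support g = Function.support f := by
      ext x
      simp [hgdef, Function.mem_support, Complex.ofReal_eq_zero, norm_eq_zero]
    rw [this]; exact hf
  -- phase has modulus 1
  have hc : ∀ x y : V, ‖Complex.exp (Complex.I * (θ x y : ℝ))‖ = 1 := by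
    intro x y; rw [mul_comm]; exact Complex.norm_exp_ofReal_mul_I _
  -- reductions of quadratic forms to finite sums
  have hMag : qMag G θ f = (1 / 2) * ∑ x ∈ S, ∑ y ∈ S,
      (if G.Adj x y then ‖f x - Complex.exp (Complex.I * (θ x y : ℝ)) * f y‖ ^ 2 else 0) := by
    unfold qMag
    congr 1
    refine hred _ ?_
    intro x y hne
    by_cases hadj : G.Adj x y
    · refine ⟨hadj, ?_⟩
      by_contra hcon
      push_neg at hcon
      exact hne (by simp [hadj, hcon.1, hcon.2])
    · exact absurd (by simp [hadj]) hne
  have hLapg : qLap G g = (1 / 2) * ∑ x ∈ S, ∑ y ∈ S,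
      (if G.Adj x y then (‖f x‖ - ‖f y‖) ^ 2 else 0) := by
    unfold qLap
    have hpt : ∀ x y : V, ‖g x - g y‖ ^ 2 = (‖f x‖ - ‖f y‖) ^ 2 := by
      intro x y
      rw [hgdef]
      rw [← Complex.ofReal_sub, Complex.norm_real, Real.norm_eq_abs, sq_abs]
    have : (∑' (x : V), ∑' (y : V), if G.Adj x y then ‖g x - g y‖ ^ 2 else 0)
        = ∑' (x : V), ∑' (y : V), if G.Adj x y then (‖f x‖ - ‖f y‖) ^ 2 else 0 := by
      refine tsum_congr fun x => tsum_congr fun y => ?_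
      by_cases hadj : G.Adj x y
      · simp only [hadj, if_true]; exact hpt x y
      · simp [hadj]
    rw [this]
    congr 1
    refine hred _ ?_
    intro x y hne
    by_cases hadj : G.Adj x y
    · refine ⟨hadj, ?_⟩
      by_contra hcon
      push_neg at hcon
      exact hne (by simp [hadj, hcon.1, hcon.2])
    · exact absurd (by simp [hadj]) hne
  have hDeg : qDeg G f = ∑ x ∈ S, (G.degree x : ℝ) * ‖f x‖ ^ 2 := by
    unfold qDeg
    refine tsum_eq_sum ?_
    intro x hx
    simp [hf0 x hx]
  -- degree identities
  have hD1 : ∑ x ∈ S, ∑ y ∈ S, (if G.Adj x y then ‖f x‖ ^ 2 else 0)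
      = ∑ x ∈ S, (G.degree x : ℝ) * ‖f x‖ ^ 2 := by
    refine Finset.sum_congr rfl ?_
    intro x _
    by_cases h0 : f x = 0
    · simp [h0]
    · rw [← Finset.sum_filter]
      have hfil : S.filter (fun y => G.Adj x y) = G.neighborFinset x := by
        ext y
        simp only [Finset.mem_filter, SimpleGraph.mem_neighborFinset]
        constructor
        · exact fun hy => hy.2
        · exact fun hy => ⟨hNS x h0 (by simp [SimpleGraph.mem_neighborFinset, hy]), hy⟩
      rw [hfil, Finset.sum_const, SimpleGraph.card_neighborFinset_eq_degree,
        nsmul_eq_mul]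
  have hD2 : ∑ x ∈ S, ∑ y ∈ S, (if G.Adj x y then ‖f y‖ ^ 2 else 0)
      = ∑ x ∈ S, (G.degree x : ℝ) * ‖f x‖ ^ 2 := by
    rw [Finset.sum_comm]
    rw [← hD1]
    refine Finset.sum_congr rfl fun y _ => Finset.sum_congr rfl fun x _ => ?_
    congr 1
    · exact propext (G.adj_comm x y)
  -- Claim A : qLap g ≤ qMag f
  have hA : qLap G g ≤ qMag G θ f := by
    rw [hLapg, hMag]
    have hle : ∑ x ∈ S, ∑ y ∈ S, (if G.Adj x y then (‖f x‖ - ‖f y‖) ^ 2 else 0)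
        ≤ ∑ x ∈ S, ∑ y ∈ S,
          (if G.Adj x y then ‖f x - Complex.exp (Complex.I * (θ x y : ℝ)) * f y‖ ^ 2 else 0) := by
      refine Finset.sum_le_sum fun x _ => Finset.sum_le_sum fun y _ => ?_
      by_cases hadj : G.Adj x y
      · simpa [hadj] using pw1 (f x) (f y) _ (hc x y)
      · simp [hadj]
    linarith
  -- Claim B : qMag f + qLap g ≤ 2 * qDeg f
  have hB : qMag G θ f + qLap G g ≤ 2 * qDeg G f := by
    rw [hLapg, hMag, hDeg]
    have hle : (∑ x ∈ S, ∑ y ∈ S,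
          (if G.Adj x y then ‖f x - Complex.exp (Complex.I * (θ x y : ℝ)) * f y‖ ^ 2 else 0))
        + ∑ x ∈ S, ∑ y ∈ S, (if G.Adj x y then (‖f x‖ - ‖f y‖) ^ 2 else 0)
        ≤ ∑ x ∈ S, ∑ y ∈ S, (if G.Adj x y then 2 * (‖f x‖ ^ 2 + ‖f y‖ ^ 2) else 0) := by
      rw [← Finset.sum_add_distrib]
      refine Finset.sum_le_sum fun x _ => ?_
      rw [← Finset.sum_add_distrib]
      refine Finset.sum_le_sum fun y _ => ?_
      by_cases hadj : G.Adj x y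
      · simpa [hadj] using pw2 (f x) (f y) _ (hc x y)
      · simp [hadj]
    have hsplit : ∑ x ∈ S, ∑ y ∈ S, (if G.Adj x y then 2 * (‖f x‖ ^ 2 + ‖f y‖ ^ 2) else 0)
        = 4 * ∑ x ∈ S, (G.degree x : ℝ) * ‖f x‖ ^ 2 := by
      have heach : ∀ x y : V, (if G.Adj x y then 2 * (‖f x‖ ^ 2 + ‖f y‖ ^ 2) else 0)
          = 2 * (if G.Adj x y then ‖f x‖ ^ 2 else 0) + 2 * (if G.Adj x y then ‖f y‖ ^ 2 else 0) := by
        intro x y; by_cases hadj : G.Adj x y <;> simp [hadj] <;> ring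
      calc ∑ x ∈ S, ∑ y ∈ S, (if G.Adj x y then 2 * (‖f x‖ ^ 2 + ‖f y‖ ^ 2) else 0)
          = ∑ x ∈ S, ∑ y ∈ S, (2 * (if G.Adj x y then ‖f x‖ ^ 2 else 0)
            + 2 * (if G.Adj x y then ‖f y‖ ^ 2 else 0)) := by
            refine Finset.sum_congr rfl fun x _ => Finset.sum_congr rfl fun y _ => heach x y
        _ = 2 * (∑ x ∈ S, ∑ y ∈ S, (if G.Adj x y then ‖f x‖ ^ 2 else 0))
            + 2 * (∑ x ∈ S, ∑ y ∈ S, (if G.Adj x y then ‖f y‖ ^ 2 else 0)) := by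
            simp [Finset.sum_add_distrib, Finset.mul_sum]
        _ = 4 * ∑ x ∈ S, (G.degree x : ℝ) * ‖f x‖ ^ 2 := by
            rw [hD1, hD2]; ring
    rw [hsplit] at hle
    linarith
  -- apply the hypothesis to g
  have hEqN : qNormSq g = qNormSq f := by
    unfold qNormSq; exact tsum_congr fun x => by rw [hgnorm]
  have hEqP : qPot q g = qPot q f := by
    unfold qPot; exact tsum_congr fun x => by rw [hgnorm]
  have hEqD : qDeg G g = qDeg G f := by
    unfold qDeg; exact tsum_congr fun x => by rw [hgnorm]
  have hg2 := h g hgsup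
  rw [hEqN, hEqP, hEqD] at hg2
  constructor
  · linarith
  · nlinarith [hg2, hB, hA]

end
end

section
/- Let G = (V,E) be a locally finite graph, q : V → [0,∞) and U ⊆ V. Then for every finitely supported f : V → ℂ whose support is contained in U, (1 − √(1 − α_U²))·(Q_deg(f) + Q_q(f)) ≤ Q_Δ(f) + Q_q(f) ≤ (1 + √(1 − α_U²))·(Q_deg(f) + Q_q(f)). -/
/-!
Write `D = Q_deg(f) + Q_q(f)`. Expanding the square gives
`Q_Δ(f) + Q_q(f) = D - ∑_{x ~ y} Re (f x * conj (f y))`, so it suffices to bound the cross term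
by `√(1 - α²) D`. With `g = |f|` it is at most `s = ∑_{x ~ y} g x * g y`. The co-area formula
applied to `g²` gives `α D ≤ ½ ∑_{x ~ y} |g x² - g y²| + Q_q(g)`, and by Cauchy–Schwarz
`(∑_{x ~ y} |g x² - g y²|)² ≤ ∑ (g x - g y)² ∑ (g x + g y)² = 4 (Q_deg(g)² - s²)`;
together with `∑_{x ~ y} |g x² - g y²| ≤ 2 Q_deg(g)` this yields `s² ≤ (1 - α²) D²`.
All sums are finite: they run over adjacent pairs inside the support of `f` and its neighbours.
-/

open scoped BigOperators

noncomputable section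

variable {V : Type*} [DecidableEq V] (G : SimpleGraph V) [DecidableRel G.Adj]

variable [G.LocallyFinite]

open Finset SimpleGraph

def adjPairs (S : Finset V) : Finset (V × V) := (S ×ˢ S).filter fun p => G.Adj p.1 p.2

section AdjPairs

variable {G}

omit [DecidableEq V] [G.LocallyFinite] in
lemma mem_adjPairs {S : Finset V} {p : V × V} :
    p ∈ adjPairs G S ↔ p.1 ∈ S ∧ p.2 ∈ S ∧ G.Adj p.1 p.2 := by
  simp [adjPairs, and_assoc]

omit [DecidableEq V] [G.LocallyFinite] in
lemma sum_adjPairs_swap {M : Type*} [AddCommMonoid M] (S : Finset V) (φ : V → V → M) :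
    ∑ p ∈ adjPairs G S, φ p.2 p.1 = ∑ p ∈ adjPairs G S, φ p.1 p.2 :=
  Finset.sum_nbij' Prod.swap Prod.swap
    (fun p hp => by simp only [mem_adjPairs] at hp ⊢; exact ⟨hp.2.1, hp.1, hp.2.2.symm⟩)
    (fun p hp => by simp only [mem_adjPairs] at hp ⊢; exact ⟨hp.2.1, hp.1, hp.2.2.symm⟩)
    (fun _ _ => rfl) (fun _ _ => rfl) (fun _ _ => rfl)

omit [DecidableEq V] in
lemma sum_adjPairs_eq_sum_neighborFinset {M : Type*} [AddCommMonoid M] {F S : Finset V}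
    (hFS : F ⊆ S) (hN : ∀ x ∈ F, G.neighborFinset x ⊆ S) (φ : V → V → M)
    (hφ : ∀ x y, G.Adj x y → φ x y ≠ 0 → x ∈ F) :
    ∑ p ∈ adjPairs G S, φ p.1 p.2 = ∑ x ∈ F, ∑ y ∈ G.neighborFinset x, φ x y := by
  rw [adjPairs, sum_filter, sum_product]
  refine (sum_subset hFS fun x _ hxF => sum_eq_zero fun y _ => ?_).symm.trans
    (sum_congr rfl fun x hx => ?_)
  · split_ifs with hxy
    · by_contra h; exact hxF (hφ x y hxy h)
    · rfl
  · rw [← sum_filter]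
    congr 1
    ext y
    rw [mem_filter, mem_neighborFinset]
    exact ⟨And.right, fun hxy => ⟨hN x hx ((mem_neighborFinset G x y).2 hxy), hxy⟩⟩

omit [DecidableEq V] in
lemma sum_adjPairs_add {F S : Finset V} (hFS : F ⊆ S)
    (hN : ∀ x ∈ F, G.neighborFinset x ⊆ S) (a : V → ℝ) (ha : ∀ x, a x ≠ 0 → x ∈ F) :
    ∑ p ∈ adjPairs G S, (a p.1 + a p.2) = 2 * ∑ x ∈ F, (G.degree x : ℝ) * a x := by
  have hfst : ∑ p ∈ adjPairs G S, a p.1 = ∑ x ∈ F, (G.degree x : ℝ) * a x := by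
    rw [sum_adjPairs_eq_sum_neighborFinset hFS hN (fun x _ => a x) fun x _ _ => ha x]
    simp [card_neighborFinset_eq_degree]
  rw [sum_add_distrib, ← sum_adjPairs_swap S fun _ y => a y, hfst, two_mul]

lemma sum_adjPairs_boundary {S W : Finset V} (hWS : W ⊆ S)
    (hN : ∀ x ∈ W, G.neighborFinset x ⊆ S) :
    ∑ p ∈ adjPairs G S, (if p.1 ∈ W ∧ p.2 ∉ W then (1 : ℝ) else 0) = bdryCard G W := by
  rw [sum_adjPairs_eq_sum_neighborFinset hWS hN (fun x y => if x ∈ W ∧ y ∉ W then (1 : ℝ) else 0)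
    fun x y _ h => by by_contra hx; simp [hx] at h]
  simp only [bdryCard, Nat.cast_sum]
  refine sum_congr rfl fun x hx => ?_
  simp only [hx, true_and, sum_boole]

end AdjPairs

section Cheeger

variable {q : V → ℝ} (U : Set V)

omit [DecidableRel G.Adj] in
lemma cheegerQuotient_nonneg (hq : ∀ x, 0 ≤ q x) (W : Finset V) :
    0 ≤ (if (∑ x ∈ W, ((G.degree x : ℝ) + q x)) = 0 then 0
      else ((bdryCard G W : ℝ) + ∑ x ∈ W, q x) / ∑ x ∈ W, ((G.degree x : ℝ) + q x)) := by
  split_ifs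
  · rfl
  · exact div_nonneg (add_nonneg (Nat.cast_nonneg _) (sum_nonneg fun x _ => hq x))
      (sum_nonneg fun x _ => add_nonneg (Nat.cast_nonneg _) (hq x))

omit [DecidableRel G.Adj] in
lemma cheeger_nonneg (hq : ∀ x, 0 ≤ q x) : 0 ≤ cheeger G q U :=
  Real.iInf_nonneg fun W => cheegerQuotient_nonneg G hq W.1

omit [DecidableRel G.Adj] in
lemma cheeger_mul_le (hq : ∀ x, 0 ≤ q x) {W : Finset V} (hWU : ↑W ⊆ U) :
    cheeger G q U * ∑ x ∈ W, ((G.degree x : ℝ) + q x) ≤ bdryCard G W + ∑ x ∈ W, q x := by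
  have hnum : (0 : ℝ) ≤ bdryCard G W + ∑ x ∈ W, q x :=
    add_nonneg (Nat.cast_nonneg _) (sum_nonneg fun x _ => hq x)
  rcases W.eq_empty_or_nonempty with rfl | hW
  · simp
  have hle := ciInf_le ⟨0, Set.forall_mem_range.2 fun W => cheegerQuotient_nonneg G hq W.1⟩
    (⟨W, hWU, hW⟩ : {W : Finset V // ↑W ⊆ U ∧ W.Nonempty})
  split_ifs at hle with hd
  · rw [hd, mul_zero]; exact hnum
  · have hpos : 0 < ∑ x ∈ W, ((G.degree x : ℝ) + q x) :=
      (sum_nonneg fun x _ => add_nonneg (Nat.cast_nonneg _) (hq x)).lt_of_ne' hd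
    exact (le_div_iff₀ hpos).1 hle

end Cheeger

section Coarea

lemma min_add_max_sub_zero (a t : ℝ) : min a t + max (a - t) 0 = a := by
  rcases le_total a t with h | h <;> simp [h, sub_nonneg.2, sub_nonpos.2]

/-- Both truncations are monotone, so the two differences on the right have the sign of `a - b`. -/
lemma abs_sub_eq_abs_min_sub_add_abs_max_sub (a b t : ℝ) :
    |a - b| = |min a t - min b t| + |max (a - t) 0 - max (b - t) 0| := by
  wlog hab : a ≤ b generalizing a b
  · rw [abs_sub_comm, this b a (le_of_not_ge hab), abs_sub_comm (min a t),
      abs_sub_comm (max (a - t) 0)]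
  have hmin : min a t ≤ min b t := min_le_min_right t hab
  have hmax : max (a - t) 0 ≤ max (b - t) 0 := max_le_max_right 0 (by linarith)
  rw [abs_of_nonpos (by linarith), abs_of_nonpos (by linarith), abs_of_nonpos (by linarith)]
  linarith [min_add_max_sub_zero a t, min_add_max_sub_zero b t]

variable {q : V → ℝ} {U : Set V} {F S : Finset V}

omit [DecidableRel G.Adj] [G.LocallyFinite] in
lemma sum_mul_ite_mem {W : Finset V} (hWF : W ⊆ F) (c : V → ℝ) (t : ℝ) :
    ∑ x ∈ F, c x * (if x ∈ W then t else 0) = t * ∑ x ∈ W, c x := by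
  simp_rw [mul_ite, mul_zero]
  rw [sum_ite_mem, inter_eq_right.2 hWF, mul_comm, sum_mul]

lemma cheeger_mul_sum_ite_le (hq : ∀ x, 0 ≤ q x) (hFU : ↑F ⊆ U) (hFS : F ⊆ S)
    (hN : ∀ x ∈ F, G.neighborFinset x ⊆ S) {W : Finset V} (hWF : W ⊆ F) {t : ℝ} (ht : 0 ≤ t) :
    cheeger G q U * ∑ x ∈ F, ((G.degree x : ℝ) + q x) * (if x ∈ W then t else 0)
      ≤ 1 / 2 * ∑ p ∈ adjPairs G S,
          |(if p.1 ∈ W then t else 0) - (if p.2 ∈ W then t else 0)|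
        + ∑ x ∈ F, q x * (if x ∈ W then t else 0) := by
  have hjump : ∀ x y : V, |(if x ∈ W then t else 0) - (if y ∈ W then t else 0)|
      = t * ((if x ∈ W ∧ y ∉ W then 1 else 0) + (if y ∈ W ∧ x ∉ W then 1 else 0)) := by
    intro x y
    by_cases hx : x ∈ W <;> by_cases hy : y ∈ W <;> simp [hx, hy, abs_of_nonneg ht]
  have hbdry : ∑ p ∈ adjPairs G S, |(if p.1 ∈ W then t else 0) - (if p.2 ∈ W then t else 0)|
      = t * (2 * bdryCard G W) := by
    have hWS := hWF.trans hFS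
    have hNW : ∀ x ∈ W, G.neighborFinset x ⊆ S := fun x hx => hN x (hWF hx)
    simp_rw [hjump, ← mul_sum, sum_add_distrib]
    rw [← sum_adjPairs_swap S fun y x => if x ∈ W ∧ y ∉ W then (1 : ℝ) else 0,
      sum_adjPairs_boundary hWS hNW, two_mul]
  rw [sum_mul_ite_mem hWF, sum_mul_ite_mem hWF, hbdry]
  have hW := mul_le_mul_of_nonneg_left (cheeger_mul_le G U hq ((coe_subset.2 hWF).trans hFU)) ht
  linarith

/-- Co-area argument: peel off the lowest level `t` of `g`, i.e. write `g = min g t + (g - t)⁺`,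
where `min g t` is `t` times the indicator of the support of `g` and `(g - t)⁺` has smaller
support. -/
lemma cheeger_mul_sum_le (hq : ∀ x, 0 ≤ q x) (hFU : ↑F ⊆ U) (hFS : F ⊆ S)
    (hN : ∀ x ∈ F, G.neighborFinset x ⊆ S) (g : V → ℝ) (hg : ∀ x, 0 ≤ g x)
    (hgF : ∀ x, g x ≠ 0 → x ∈ F) :
    cheeger G q U * ∑ x ∈ F, ((G.degree x : ℝ) + q x) * g x
      ≤ 1 / 2 * ∑ p ∈ adjPairs G S, |g p.1 - g p.2| + ∑ x ∈ F, q x * g x := by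
  induction hn : #(F.filter (g · ≠ 0)) using Nat.strong_induction_on generalizing g with
  | _ n ih =>
  set W := F.filter (g · ≠ 0)
  have hmemW : ∀ x, g x ≠ 0 → x ∈ W := fun x hx => mem_filter.2 ⟨hgF x hx, hx⟩
  rcases W.eq_empty_or_nonempty with hW | hW
  · have hzero : ∀ x, g x = 0 := fun x => by
      by_contra hx; simpa [hW] using hmemW x hx
    simp [hzero]
  obtain ⟨x₀, hx₀W, hx₀⟩ := exists_mem_eq_inf' hW g
  set t := W.inf' hW g
  have ht : 0 < t := hx₀ ▸ (hg x₀).lt_of_ne' (mem_filter.1 hx₀W).2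
  have hlow : ∀ x, (if x ∈ W then t else 0) = min (g x) t := by
    intro x
    by_cases hx : x ∈ W
    · simp [hx, show t ≤ g x from inf'_le g hx]
    · have : g x = 0 := by by_contra h; exact hx (hmemW x h)
      simp [hx, this, ht.le]
  set g' := fun x => max (g x - t) 0
  have hg'W : ∀ x, g' x ≠ 0 → x ∈ W.erase x₀ := by
    intro x hx
    have hxt : t < g x := by by_contra h; exact hx (max_eq_right (by linarith))
    refine mem_erase.2 ⟨fun h => ?_, hmemW x (by linarith)⟩
    subst h; linarith
  have hcard : #(F.filter (g' · ≠ 0)) < n := by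
    calc #(F.filter (g' · ≠ 0)) ≤ #(W.erase x₀) :=
          card_le_card fun x hx => hg'W x (mem_filter.1 hx).2
      _ < #W := card_erase_lt_of_mem hx₀W
      _ = n := hn
  have hhigh := ih _ hcard g' (fun x => le_max_right _ _)
    (fun x hx => mem_of_mem_filter x (mem_of_mem_erase (hg'W x hx))) rfl
  have hlevel := cheeger_mul_sum_ite_le G hq hFU hFS hN (W := W) (filter_subset _ F) ht.le
  simp only [hlow] at hlevel
  have hsplit : ∀ c : V → ℝ, ∑ x ∈ F, c x * g x
      = ∑ x ∈ F, c x * min (g x) t + ∑ x ∈ F, c x * g' x := fun c => by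
    rw [← sum_add_distrib]
    exact sum_congr rfl fun x _ => by rw [← mul_add, min_add_max_sub_zero]
  have hjumps : ∑ p ∈ adjPairs G S, |g p.1 - g p.2| = ∑ p ∈ adjPairs G S,
      |min (g p.1) t - min (g p.2) t| + ∑ p ∈ adjPairs G S, |g' p.1 - g' p.2| := by
    rw [← sum_add_distrib]
    exact sum_congr rfl fun p _ => abs_sub_eq_abs_min_sub_add_abs_max_sub _ _ t
  rw [hsplit, hsplit, hjumps]
  linarith

end Coarea

section QuadraticForms

variable {F S : Finset V}

omit [DecidableEq V] in
lemma sum_adjPairs_sub_sq (hFS : F ⊆ S) (hN : ∀ x ∈ F, G.neighborFinset x ⊆ S) (g : V → ℝ)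
    (hgF : ∀ x, g x ≠ 0 → x ∈ F) :
    ∑ p ∈ adjPairs G S, (g p.1 - g p.2) ^ 2
      = 2 * ∑ x ∈ F, (G.degree x : ℝ) * g x ^ 2 - 2 * ∑ p ∈ adjPairs G S, g p.1 * g p.2 := by
  rw [← sum_adjPairs_add hFS hN (g · ^ 2) fun x hx => hgF x (by simpa using hx), mul_sum,
    ← sum_sub_distrib]
  exact sum_congr rfl fun _ _ => by ring

omit [DecidableEq V] in
lemma sum_adjPairs_add_sq (hFS : F ⊆ S) (hN : ∀ x ∈ F, G.neighborFinset x ⊆ S) (g : V → ℝ)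
    (hgF : ∀ x, g x ≠ 0 → x ∈ F) :
    ∑ p ∈ adjPairs G S, (g p.1 + g p.2) ^ 2
      = 2 * ∑ x ∈ F, (G.degree x : ℝ) * g x ^ 2 + 2 * ∑ p ∈ adjPairs G S, g p.1 * g p.2 := by
  rw [← sum_adjPairs_add hFS hN (g · ^ 2) fun x hx => hgF x (by simpa using hx), mul_sum,
    ← sum_add_distrib]
  exact sum_congr rfl fun _ _ => by ring

omit [DecidableEq V] in
lemma sum_adjPairs_abs_sq_sub_sq_le (hFS : F ⊆ S) (hN : ∀ x ∈ F, G.neighborFinset x ⊆ S)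
    (g : V → ℝ) (hgF : ∀ x, g x ≠ 0 → x ∈ F) :
    ∑ p ∈ adjPairs G S, |g p.1 ^ 2 - g p.2 ^ 2| ≤ 2 * ∑ x ∈ F, (G.degree x : ℝ) * g x ^ 2 := by
  rw [← sum_adjPairs_add hFS hN (g · ^ 2) fun x hx => hgF x (by simpa using hx)]
  exact sum_le_sum fun p _ => abs_sub_le_of_nonneg_of_le (sq_nonneg _)
    (le_add_of_nonneg_right (sq_nonneg _)) (sq_nonneg _) (le_add_of_nonneg_left (sq_nonneg _))

omit [DecidableEq V] in
lemma sq_sum_adjPairs_abs_sq_sub_sq_le (hFS : F ⊆ S) (hN : ∀ x ∈ F, G.neighborFinset x ⊆ S)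
    (g : V → ℝ) (hg : ∀ x, 0 ≤ g x) (hgF : ∀ x, g x ≠ 0 → x ∈ F) :
    (∑ p ∈ adjPairs G S, |g p.1 ^ 2 - g p.2 ^ 2|) ^ 2
      ≤ 4 * ((∑ x ∈ F, (G.degree x : ℝ) * g x ^ 2) ^ 2
        - (∑ p ∈ adjPairs G S, g p.1 * g p.2) ^ 2) := by
  have hfactor : ∀ p : V × V, |g p.1 ^ 2 - g p.2 ^ 2| = |g p.1 - g p.2| * (g p.1 + g p.2) :=
    fun p => by rw [← abs_of_nonneg (add_nonneg (hg p.1) (hg p.2)), ← abs_mul]; congr 1; ring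
  simp_rw [hfactor]
  refine (sum_mul_sq_le_sq_mul_sq _ _ _).trans_eq ?_
  simp_rw [sq_abs]
  rw [sum_adjPairs_sub_sq G hFS hN g hgF, sum_adjPairs_add_sq G hFS hN g hgF]
  ring

end QuadraticForms

lemma le_sqrt_one_sub_sq_mul {α D P s E : ℝ} (hα : 0 ≤ α) (hD : 0 ≤ D) (hP : 0 ≤ P)
    (hCS : E ^ 2 ≤ 4 * (D ^ 2 - s ^ 2)) (hED : E ≤ 2 * D) (hαE : α * (D + P) ≤ E / 2 + P) :
    s ≤ √(1 - α ^ 2) * (D + P) := by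
  have hsq : s ^ 2 ≤ (1 - α ^ 2) * (D + P) ^ 2 := by
    have := pow_le_pow_left₀ (by positivity) hαE 2
    nlinarith [mul_le_mul_of_nonneg_right hED hP]
  rw [← Real.sqrt_sq (add_nonneg hD hP), ← Real.sqrt_mul' _ (sq_nonneg _)]
  exact (le_abs_self s).trans (Real.abs_le_sqrt hsq)

lemma abs_sum_adjPairs_re_le {q : V → ℝ} {U : Set V} {F S : Finset V} (hq : ∀ x, 0 ≤ q x)
    (hFU : ↑F ⊆ U) (hFS : F ⊆ S) (hN : ∀ x ∈ F, G.neighborFinset x ⊆ S) (f : V → ℂ)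
    (hfF : ∀ x, f x ≠ 0 → x ∈ F) :
    |∑ p ∈ adjPairs G S, (f p.1 * starRingEnd ℂ (f p.2)).re|
      ≤ √(1 - cheeger G q U ^ 2) * ∑ x ∈ F, ((G.degree x : ℝ) + q x) * ‖f x‖ ^ 2 := by
  set g : V → ℝ := (‖f ·‖)
  have hgF : ∀ x, g x ≠ 0 → x ∈ F := fun x hx => hfF x (norm_ne_zero_iff.1 hx)
  have hg2F : ∀ x, g x ^ 2 ≠ 0 → x ∈ F := fun x hx => hgF x (pow_ne_zero_iff two_ne_zero |>.1 hx)
  have hre : |∑ p ∈ adjPairs G S, (f p.1 * starRingEnd ℂ (f p.2)).re|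
      ≤ ∑ p ∈ adjPairs G S, g p.1 * g p.2 :=
    (abs_sum_le_sum_abs _ _).trans <| sum_le_sum fun p _ =>
      (Complex.abs_re_le_norm _).trans_eq (by rw [norm_mul, Complex.norm_conj])
  have hcoarea := cheeger_mul_sum_le G hq hFU hFS hN (g · ^ 2) (fun x => sq_nonneg _) hg2F
  simp_rw [add_mul, sum_add_distrib] at hcoarea
  refine hre.trans ?_
  simp_rw [add_mul, sum_add_distrib]
  exact le_sqrt_one_sub_sq_mul (cheeger_nonneg G U hq)
    (sum_nonneg fun x _ => by positivity) (sum_nonneg fun x _ => mul_nonneg (hq x) (by positivity))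
    (sq_sum_adjPairs_abs_sq_sub_sq_le G hFS hN g (fun x => norm_nonneg _) hgF)
    (sum_adjPairs_abs_sq_sub_sq_le G hFS hN g hgF) (by linarith)

section TsumReduction

variable {F S : Finset V} {f : V → ℂ}

omit [DecidableEq V] in
lemma tsum_mul_norm_sq_eq_sum (c : V → ℝ) (hfF : ∀ x, f x ≠ 0 → x ∈ F) :
    ∑' x, c x * ‖f x‖ ^ 2 = ∑ x ∈ F, c x * ‖f x‖ ^ 2 :=
  tsum_eq_sum fun x hx => by simp [not_imp_comm.1 (hfF x) hx]

omit [DecidableEq V] [DecidableRel G.Adj] in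
lemma qDeg_add_qPot_eq_sum (q : V → ℝ) (hfF : ∀ x, f x ≠ 0 → x ∈ F) :
    qDeg G f + qPot q f = ∑ x ∈ F, ((G.degree x : ℝ) + q x) * ‖f x‖ ^ 2 := by
  rw [qDeg, qPot, tsum_mul_norm_sq_eq_sum _ hfF, tsum_mul_norm_sq_eq_sum _ hfF, ← sum_add_distrib]
  exact sum_congr rfl fun x _ => by ring

omit [DecidableEq V] in
lemma qLap_eq_sum_adjPairs (hFS : F ⊆ S) (hN : ∀ x ∈ F, G.neighborFinset x ⊆ S)
    (hfF : ∀ x, f x ≠ 0 → x ∈ F) :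
    qLap G f = 1 / 2 * ∑ p ∈ adjPairs G S, ‖f p.1 - f p.2‖ ^ 2 := by
  have hvanish : ∀ x y, G.Adj x y → x ∉ S → f x = 0 ∧ f y = 0 := fun x y hxy hx =>
    ⟨not_imp_comm.1 (hfF x) fun h => hx (hFS h),
      not_imp_comm.1 (hfF y) fun h => hx (hN y h ((mem_neighborFinset G y x).2 hxy.symm))⟩
  have hterm : ∀ x y, x ∉ S ∨ y ∉ S →
      (if G.Adj x y then ‖f x - f y‖ ^ 2 else 0) = 0 := by
    rintro x y (hx | hy)
    · split_ifs with hxy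
      · simp [hvanish x y hxy hx]
      · rfl
    · split_ifs with hxy
      · simp [hvanish y x hxy.symm hy]
      · rfl
  rw [qLap, tsum_eq_sum (s := S) fun x hx => by simp [hterm x _ (.inl hx)],
    adjPairs, sum_filter, sum_product]
  congr 1
  exact sum_congr rfl fun x _ => tsum_eq_sum fun y hy => hterm x y (.inr hy)

omit [DecidableEq V] in
lemma qLap_eq_qDeg_sub (hFS : F ⊆ S) (hN : ∀ x ∈ F, G.neighborFinset x ⊆ S)
    (hfF : ∀ x, f x ≠ 0 → x ∈ F) :
    qLap G f = qDeg G f - ∑ p ∈ adjPairs G S, (f p.1 * starRingEnd ℂ (f p.2)).re := by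
  have hexpand : ∀ p : V × V, ‖f p.1 - f p.2‖ ^ 2
      = (‖f p.1‖ ^ 2 + ‖f p.2‖ ^ 2) - 2 * (f p.1 * starRingEnd ℂ (f p.2)).re := fun p => by
    simp only [Complex.sq_norm, Complex.normSq_sub]
  rw [qLap_eq_sum_adjPairs G hFS hN hfF, qDeg, tsum_mul_norm_sq_eq_sum _ hfF]
  simp_rw [hexpand, sum_sub_distrib]
  rw [sum_adjPairs_add hFS hN (‖f ·‖ ^ 2) fun x hx => hfF x (by simpa using hx), ← mul_sum]
  ring

end TsumReduction

theorem stmt14 (q : V → ℝ) (hq : ∀ x, 0 ≤ q x) (U : Set V)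
    (f : V → ℂ) (hf : (Function.support f).Finite) (hfU : Function.support f ⊆ U) :
    (1 - Real.sqrt (1 - (cheeger G q U) ^ 2)) * (qDeg G f + qPot q f)
        ≤ qLap G f + qPot q f ∧
      qLap G f + qPot q f
        ≤ (1 + Real.sqrt (1 - (cheeger G q U) ^ 2)) * (qDeg G f + qPot q f) := by
  set F := hf.toFinset
  set S := F ∪ F.biUnion (G.neighborFinset ·)
  have hFS : F ⊆ S := subset_union_left
  have hN : ∀ x ∈ F, G.neighborFinset x ⊆ S :=
    fun x hx => (subset_biUnion_of_mem (G.neighborFinset ·) hx).trans subset_union_right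
  have hfF : ∀ x, f x ≠ 0 → x ∈ F := fun x hx => hf.mem_toFinset.2 hx
  have hFU : ↑F ⊆ U := hf.coe_toFinset.symm ▸ hfU
  have hbound := abs_sum_adjPairs_re_le G hq hFU hFS hN f hfF
  rw [← qDeg_add_qPot_eq_sum G q hfF] at hbound
  rw [qLap_eq_qDeg_sub G hFS hN hfF]
  constructor <;> linarith [abs_le.1 hbound]

end
end

section
/- Let G = (V,E) be a locally finite graph, q : V → [0,∞), and assume (G,q) is (a,k)-sparse for some a, k ≥ 0. Let d := inf_{x∈V}(deg(x) + q(x)) and assume 0 < d < ∞. Then α_V ≥ (d − k)/(d(1 + a)); in particular α_V > 0 whenever d > k. -/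
open scoped BigOperators

noncomputable section

variable {V : Type*} [DecidableEq V] (G : SimpleGraph V) [DecidableRel G.Adj]

variable [G.LocallyFinite]

/-- if `(G,q)` is `(a,k)`-sparse with `q ≥ 0` and
`d := inf_x (deg x + q x)` satisfies `0 < d < ∞`, then `α_V ≥ (d-k)/(d(1+a))`;
in particular `α_V > 0` whenever `d > k`. -/
theorem stmt17 [Countable V] [Nonempty V] (q : V → ℝ) (hq : ∀ x, 0 ≤ q x)
    (a k : ℝ) (ha : 0 ≤ a) (hk : 0 ≤ k) (hsparse : IsSparse G q a k)
    (hd : 0 < ⨅ x, ((G.degree x : ℝ) + q x)) :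
    ((⨅ x, ((G.degree x : ℝ) + q x)) - k) /
        ((⨅ x, ((G.degree x : ℝ) + q x)) * (1 + a)) ≤ cheeger G q Set.univ ∧
      (k < ⨅ x, ((G.degree x : ℝ) + q x) → 0 < cheeger G q Set.univ) := by
  set d := ⨅ x, ((G.degree x : ℝ) + q x) with hdef
  have hbdd : BddBelow (Set.range fun x => ((G.degree x : ℝ) + q x)) :=
    ⟨0, by rintro _ ⟨x, rfl⟩; exact add_nonneg (Nat.cast_nonneg _) (hq x)⟩
  have hpos : 0 < d * (1 + a) := mul_pos hd (by linarith)
  have hne : Nonempty {W : Finset V // ↑W ⊆ (Set.univ : Set V) ∧ W.Nonempty} :=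
    ⟨⟨{Classical.arbitrary V}, by simp, Finset.singleton_nonempty _⟩⟩
  have key : (d - k) / (d * (1 + a)) ≤ cheeger G q Set.univ := by
    apply le_ciInf
    rintro ⟨W, hWU, hWne⟩
    dsimp only
    have hDpos : 0 < ∑ x ∈ W, ((G.degree x : ℝ) + q x) :=
      Finset.sum_pos (fun x _ => lt_of_lt_of_le hd (ciInf_le hbdd x)) hWne
    rw [if_neg hDpos.ne']
    have hqW : 0 ≤ ∑ x ∈ W, q x := Finset.sum_nonneg fun x _ => hq x
    -- degree sum identity : ∑ deg = 2|E_W| + |∂W|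
    have hdegnat : ∑ x ∈ W, G.degree x = edgesTwice G W + bdryCard G W := by
      unfold edgesTwice bdryCard
      rw [Finset.card_filter, Finset.sum_product, ← Finset.sum_add_distrib]
      apply Finset.sum_congr rfl
      intro x _
      have h1 : W.filter (G.Adj x) = (G.neighborFinset x).filter (· ∈ W) := by
        ext y; simp [SimpleGraph.mem_neighborFinset, and_comm]
      rw [← Finset.card_filter, h1, ← G.card_neighborFinset_eq_degree]
      exact (Finset.card_filter_add_card_filter_not _).symm
    have hdegR : ∑ x ∈ W, ((G.degree x : ℝ) + q x)
        = (edgesTwice G W : ℝ) + ((bdryCard G W : ℝ) + ∑ x ∈ W, q x) := by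
      rw [Finset.sum_add_distrib, ← Nat.cast_sum, hdegnat]
      push_cast
      ring
    -- sparsity
    have hsp := hsparse W
    have hmaxq : ∀ x ∈ W, max (q x) 0 = q x := fun x _ => max_eq_left (hq x)
    rw [Finset.sum_congr rfl hmaxq] at hsp
    -- d * |W| ≤ D
    have hcd : d * (W.card : ℝ) ≤ ∑ x ∈ W, ((G.degree x : ℝ) + q x) := by
      have : ∑ _x ∈ W, d ≤ ∑ x ∈ W, ((G.degree x : ℝ) + q x) :=
        Finset.sum_le_sum fun x _ => ciInf_le hbdd x
      simpa [mul_comm] using this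
    set D := ∑ x ∈ W, ((G.degree x : ℝ) + q x)
    set B := (bdryCard G W : ℝ) + ∑ x ∈ W, q x with hB
    rw [div_le_div_iff₀ hpos hDpos]
    -- (d - k) * D ≤ B * (d * (1 + a))
    nlinarith [mul_le_mul_of_nonneg_left hsp hd.le, mul_le_mul_of_nonneg_left hcd hk,
      mul_nonneg hd.le (Finset.sum_nonneg (fun x (_ : x ∈ W) => hq x))]
  refine ⟨key, fun hkd => lt_of_lt_of_le ?_ key⟩
  exact div_pos (sub_pos.2 hkd) hpos

end
end
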